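/- arXiv:math-ph/0510011 — 2 statements merged into one kernel-verified Lean document; each statement's English description precedes it below -/
import Mathlib

section
/- Under the hypotheses of the previous setting, suppose additionally that for every x ∈ X there exists g ∈ G with g·x ∈ Y, that N_y = N for all y ∈ Y, and that N/K has order d. Then for every x ∈ X the fiber φ⁻¹(x) of φ : (G/K) × Y → X has exactly d points. -/
/-!
Since `φ([g], y) = g • y`, a point of the fiber over `x` is determined by its first coordinate
`[g]`, and then `g⁻¹ • x ∈ Y`. Fix `g₀` with `g₀ • x ∈ Y`; because `N_y = N`, the condition
`g⁻¹ • x ∈ Y` says exactly `g₀ * g ∈ N`. Hence `n ↦ ([g₀⁻¹ n], n⁻¹ • g₀ • x)` maps `N` onto the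
fiber, and two elements of `N` have the same image iff they lie in the same coset of `K`.
-/

open Pointwise

section

variable {G X : Type*} [Group G] [MulAction G X] {Y : Set X} {K N : Subgroup G}

theorem inv_smul_mem_iff_mem (hN : (N : Set G) = {g : G | g • Y = Y})
    (hNy : ∀ y ∈ Y, ∀ g : G, g • y ∈ Y → g ∈ N) {y : X} (hy : y ∈ Y) {g : G} :
    g⁻¹ • y ∈ Y ↔ g ∈ N := by
  refine ⟨fun h => hNy _ h g (by rwa [smul_inv_smul]), fun hg => ?_⟩
  have hYinv : g⁻¹ ∈ (N : Set G) := N.inv_mem hg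
  rw [hN] at hYinv
  exact hYinv ▸ Set.smul_mem_smul_set hy

variable {φ : (G ⧸ K) × Y → X}

theorem fiber_ext (hφ : ∀ (g : G) (y : Y), φ ((g : G ⧸ K), y) = g • (y : X)) {x : X}
    {p q : φ ⁻¹' {x}} (h : p.1.1 = q.1.1) : p = q := by
  obtain ⟨⟨a, y⟩, hp⟩ := p
  obtain ⟨⟨b, z⟩, hq⟩ := q
  obtain ⟨g, rfl⟩ := QuotientGroup.mk_surjective a
  dsimp only at h
  subst h
  simp only [Set.mem_preimage, Set.mem_singleton_iff, hφ] at hp hq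
  congr
  exact Subtype.ext (smul_left_cancel g (hp.trans hq.symm))

theorem card_fiber_eq_card_quotient
    (hφ : ∀ (g : G) (y : Y), φ ((g : G ⧸ K), y) = g • (y : X))
    (hN : (N : Set G) = {g : G | g • Y = Y}) (hNy : ∀ y ∈ Y, ∀ g : G, g • y ∈ Y → g ∈ N)
    {x : X} {g₀ : G} (hx : g₀ • x ∈ Y) :
    Nat.card (φ ⁻¹' {x}) = Nat.card (N ⧸ K.subgroupOf N) := by
  have hmem (g : G) : g⁻¹ • x ∈ Y ↔ g₀ * g ∈ N := by
    rw [← inv_smul_mem_iff_mem hN hNy hx, mul_inv_rev, mul_smul, inv_smul_smul]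
  let f : N → φ ⁻¹' {x} := fun n =>
    ⟨(↑(g₀⁻¹ * n), ⟨_, (hmem (g₀⁻¹ * n)).2 (by simp)⟩), by simp [hφ, smul_smul]⟩
  have hf : Function.Surjective f := by
    rintro ⟨⟨q, y⟩, hp⟩
    obtain ⟨g, rfl⟩ := QuotientGroup.mk_surjective q
    simp only [Set.mem_preimage, Set.mem_singleton_iff, hφ] at hp
    refine ⟨⟨g₀ * g, (hmem g).1 (hp ▸ (inv_smul_smul g (y : X)).symm ▸ y.2)⟩, fiber_ext hφ ?_⟩
    simp [f]
  have hker (a b : N) : Setoid.ker f a b ↔ QuotientGroup.leftRel (K.subgroupOf N) a b := by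
    rw [Setoid.ker_def, QuotientGroup.leftRel_apply, Subgroup.mem_subgroupOf]
    refine ⟨fun h => ?_, fun h => fiber_ext hφ ?_⟩
    · simpa [f, QuotientGroup.eq, mul_assoc] using congrArg (fun p : φ ⁻¹' {x} => p.1.1) h
    · simpa [f, QuotientGroup.eq, mul_assoc] using h
  exact Nat.card_congr ((Quotient.congrRight hker).symm.trans
    (Setoid.quotientKerEquivOfSurjective f hf)).symm

end

theorem stmt_5_general {G X : Type*} [Group G] [MulAction G X] (Y : Set X)
    (K N : Subgroup G)
    (hN : (N : Set G) = {g : G | g • Y = Y})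
    (φ : (G ⧸ K) × Y → X)
    (hφ : ∀ (g : G) (y : Y), φ ((g : G ⧸ K), y) = g • (y : X))
    (hinv : ∀ x : X, ∃ g : G, g • x ∈ Y)
    (hNy : ∀ y ∈ Y, ∀ g : G, g • y ∈ Y → g ∈ N)
    (d : ℕ) (hd : Nat.card (N ⧸ K.subgroupOf N) = d) :
    ∀ x : X, Nat.card (φ ⁻¹' {x}) = d := by
  intro x
  obtain ⟨g₀, hx⟩ := hinv x
  rw [← hd]
  exact card_fiber_eq_card_quotient hφ hN hNy hx

/-- With `K` the pointwise and `N` the setwise stabilizer of `Y ⊆ X` and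
`φ : G/K × Y → X`, `φ([g], y) = g • y`, suppose every `x ∈ X` can be moved into `Y`
(invariance), `N_y = N` for every `y ∈ Y`, and `N/K` has order `d`. Then every fiber
`φ⁻¹(x)` has exactly `d` points. -/
theorem stmt_5 {G X : Type*} [Group G] [MulAction G X] (Y : Set X)
    (K N : Subgroup G)
    (hK : (K : Set G) = {g : G | ∀ y ∈ Y, g • y = y})
    (hN : (N : Set G) = {g : G | g • Y = Y})
    (φ : (G ⧸ K) × Y → X)
    (hφ : ∀ (g : G) (y : Y), φ ((g : G ⧸ K), y) = g • (y : X))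
    (hinv : ∀ x : X, ∃ g : G, g • x ∈ Y)
    (hNy : ∀ y ∈ Y, ∀ g : G, g • y ∈ Y → g ∈ N)
    (d : ℕ) (hd : Nat.card (N ⧸ K.subgroupOf N) = d) :
    ∀ x : X, Nat.card (φ ⁻¹' {x}) = d :=
  stmt_5_general Y K N hN φ hφ hinv hNy d hd
end

section
/- Let G be a Lie group acting smoothly on a smooth manifold X, Y a closed submanifold, K the pointwise stabilizer of Y, and φ : (G/K) × Y → X, φ([g],y) = g·y. Suppose: (a) X = ⋃_{y∈Y} G·y; (b) T_yX = T_y(G·y) ⊕ T_yY for all y ∈ Y; (c) dim G_y = dim K for all y ∈ Y, where G_y is the isotropy group; the map φ is everywhere regular; N/K is a finite group of order d, where N is the setwise stabilizer of Y; and N_y = N for every y ∈ Y. Then φ : (G/K) × Y → X is a d-sheeted covering map. -/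
open Manifold Pointwise

/-!
The setwise stabilizer `N` of `Y` acts on `(G ⧸ K) × Y` by `n • ([g], y) = ([g n⁻¹], n • y)`,
the kernel of this action is `K`, and `φ` is invariant under it; the hypothesis `N_y = N` says
that the fibres of `φ` are exactly the orbits. A local homeomorphism whose fibres are the orbits
of a free action by homeomorphisms is a covering map, since the translates of a neighbourhood on
which it is injective are pairwise disjoint. Each fibre is then a torsor under `N ⧸ K`.
-/

open MulAction

theorem IsLocalHomeomorph.isQuotientCoveringMap {E X Γ : Type*} [TopologicalSpace E]
    [TopologicalSpace X] [Group Γ] [MulAction Γ E] [ContinuousConstSMul Γ E] [IsCancelSMul Γ E]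
    {f : E → X} (hf : IsLocalHomeomorph f) (hsurj : Function.Surjective f)
    (hfib : ∀ {e₁ e₂}, f e₁ = f e₂ ↔ e₁ ∈ orbit Γ e₂) :
    IsQuotientCoveringMap f Γ where
  toIsQuotientMap := hf.isOpenMap.isQuotientMap hf.continuous hsurj
  apply_eq_iff_mem_orbit := hfib
  disjoint e := by
    obtain ⟨U, hUo, heU, hinj⟩ := hf.isLocallyInjective e
    refine ⟨U, hUo.mem_nhds heU, fun g ⟨_, ⟨u, hu, rfl⟩, hgu⟩ => ?_⟩
    exact IsCancelSMul.eq_one_of_smul (hinj hgu hu (hfib.mpr ⟨g, rfl⟩))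

section

variable (G : Type*) {X : Type*} [Group G] [MulAction G X] (Y : Set X)

theorem stabilizer_le_normalizer_fixingSubgroup :
    stabilizer G Y ≤ Subgroup.normalizer (fixingSubgroup G Y : Set G) := by
  intro n hn
  have hn' := mem_stabilizer_set.mp hn
  refine Subgroup.mem_normalizer_iff.mpr fun k => ?_
  simp only [mem_fixingSubgroup_iff, mul_smul]
  refine ⟨fun hk y hy => ?_, fun hk y hy => ?_⟩
  · rw [hk (n⁻¹ • y) ((hn' _).mp (by rwa [smul_inv_smul])), smul_inv_smul]
  · simpa using congrArg (n⁻¹ • ·) (hk (n • y) ((hn' y).mpr hy))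

def sweepMap (p : (G ⧸ fixingSubgroup G Y) × Y) : X :=
  Quotient.liftOn' p.1 (· • (p.2 : X)) fun a b hab => by
    symm
    rw [← inv_smul_eq_iff, smul_smul]
    exact (mem_fixingSubgroup_iff G).mp (QuotientGroup.leftRel_apply.mp hab) _ p.2.2

@[simp]
theorem sweepMap_mk (g : G) (y : Y) :
    sweepMap G Y ((g : G ⧸ fixingSubgroup G Y), y) = g • (y : X) :=
  rfl

def stabilizerToNormalizerOp :
    stabilizer G Y →* (Subgroup.normalizer (fixingSubgroup G Y : Set G)).op where
  toFun n := ⟨MulOpposite.op (n : G)⁻¹,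
    inv_mem (stabilizer_le_normalizer_fixingSubgroup G Y n.2)⟩
  map_one' := by ext; simp
  map_mul' _ _ := by ext; simp

def sweepDeckHom : stabilizer G Y →* Equiv.Perm ((G ⧸ fixingSubgroup G Y) × Y) where
  toFun n := (toPermHom _ _ (stabilizerToNormalizerOp G Y n)).prodCongr (toPerm n)
  map_one' := by ext <;> simp
  map_mul' _ _ := by ext <;> simp [mul_smul]

@[simp]
theorem sweepDeckHom_mk (n : stabilizer G Y) (g : G) (y : Y) :
    sweepDeckHom G Y n ((g : G ⧸ fixingSubgroup G Y), y) =
      (((g * (n : G)⁻¹ : G) : G ⧸ fixingSubgroup G Y), n • y) :=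
  rfl

theorem sweepDeckHom_apply_eq_self_iff (n : stabilizer G Y)
    (e : (G ⧸ fixingSubgroup G Y) × Y) :
    sweepDeckHom G Y n e = e ↔ (n : G) ∈ fixingSubgroup G Y := by
  obtain ⟨q, y⟩ := e
  induction q using QuotientGroup.induction_on with | H g => ?_
  rw [sweepDeckHom_mk]
  refine ⟨fun h => ?_, fun h => Prod.ext ?_ (Subtype.ext ((mem_fixingSubgroup_iff G).mp h y y.2))⟩
  · simpa using QuotientGroup.eq.mp (congrArg Prod.fst h)
  · exact QuotientGroup.eq.mpr (by simpa using h)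

theorem ker_sweepDeckHom :
    (sweepDeckHom G Y).ker = (fixingSubgroup G Y).subgroupOf (stabilizer G Y) := by
  ext n
  rw [MonoidHom.mem_ker, Subgroup.mem_subgroupOf]
  refine ⟨fun h => (mem_fixingSubgroup_iff G).mpr fun y hy => ?_,
    fun h => Equiv.ext fun e => (sweepDeckHom_apply_eq_self_iff G Y n e).mpr h⟩
  have hfix := (sweepDeckHom_apply_eq_self_iff G Y n ((1 : G), ⟨y, hy⟩)).mp (by rw [h]; rfl)
  exact (mem_fixingSubgroup_iff G).mp hfix y hy

instance : IsCancelSMul (sweepDeckHom G Y).range ((G ⧸ fixingSubgroup G Y) × Y) :=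
  isCancelSMul_iff_eq_one_of_smul_eq.mpr fun ⟨_, n, hn⟩ e h => by
    subst hn
    refine Subtype.ext ((sweepDeckHom G Y).mem_ker.mp ?_)
    rw [ker_sweepDeckHom, Subgroup.mem_subgroupOf]
    exact (sweepDeckHom_apply_eq_self_iff G Y n e).mp h

theorem sweepMap_sweepDeckHom (n : stabilizer G Y) (e : (G ⧸ fixingSubgroup G Y) × Y) :
    sweepMap G Y (sweepDeckHom G Y n e) = sweepMap G Y e := by
  obtain ⟨q, y⟩ := e
  induction q using QuotientGroup.induction_on with | H g => ?_
  simp [smul_smul]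

theorem sweepMap_eq_iff_mem_orbit (hNy : ∀ y ∈ Y, ∀ g : G, g • y ∈ Y → g ∈ stabilizer G Y)
    {e₁ e₂ : (G ⧸ fixingSubgroup G Y) × Y} :
    sweepMap G Y e₁ = sweepMap G Y e₂ ↔ e₁ ∈ orbit (sweepDeckHom G Y).range e₂ := by
  refine ⟨fun h => ?_, fun ⟨⟨_, n, hn⟩, h⟩ => ?_⟩
  · obtain ⟨q₁, y₁⟩ := e₁
    obtain ⟨q₂, y₂⟩ := e₂
    induction q₁ using QuotientGroup.induction_on with | H g₁ => ?_
    induction q₂ using QuotientGroup.induction_on with | H g₂ => ?_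
    simp only [sweepMap_mk] at h
    have hy : (g₁⁻¹ * g₂) • (y₂ : X) = y₁ := by rw [mul_smul, ← h, inv_smul_smul]
    have hn := hNy _ y₂.2 _ (hy ▸ y₁.2)
    refine ⟨⟨_, ⟨_, hn⟩, rfl⟩, ?_⟩
    show sweepDeckHom G Y ⟨_, hn⟩ _ = _
    rw [sweepDeckHom_mk]
    exact Prod.ext (congrArg QuotientGroup.mk (show g₂ * (g₁⁻¹ * g₂)⁻¹ = g₁ by group))
      (Subtype.ext hy)
  · subst hn
    rw [← h]
    exact sweepMap_sweepDeckHom G Y n e₂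

theorem continuousConstSMul_stabilizer_of_continuous [TopologicalSpace G] [TopologicalSpace X]
    (h : Continuous (sweepMap G Y)) :
    ContinuousConstSMul (stabilizer G Y) Y :=
  ⟨fun n => (h.comp (Continuous.prodMk_right ((n : G) : G ⧸ fixingSubgroup G Y))).subtype_mk _⟩

instance [TopologicalSpace G] [ContinuousMul G] [TopologicalSpace X]
    [ContinuousConstSMul (stabilizer G Y) Y] :
    ContinuousConstSMul (sweepDeckHom G Y).range ((G ⧸ fixingSubgroup G Y) × Y) :=
  ⟨fun ⟨_, n, hn⟩ => by
    subst hn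
    refine Continuous.prodMap ?_ (continuous_const_smul n)
    exact (QuotientGroup.isQuotientMap_mk _).continuous_iff.mpr
      (QuotientGroup.continuous_mk.comp (continuous_mul_const _))⟩

end

theorem stmt_6_general {G X : Type*}
    [TopologicalSpace G]
    [Group G] [IsTopologicalGroup G]
    [TopologicalSpace X]
    [MulAction G X]
    (Y : Set X)
    (K N : Subgroup G)
    (hK : (K : Set G) = {g : G | ∀ y ∈ Y, g • y = y})
    (hN : (N : Set G) = {g : G | g • Y = Y})
    (φ : (G ⧸ K) × Y → X)
    (hφ : ∀ (g : G) (y : Y), φ ((g : G ⧸ K), y) = g • (y : X))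
    -- (a) invariance condition
    (hinv : ∀ x : X, ∃ g : G, ∃ y ∈ Y, g • y = x)
    -- φ is everywhere regular
    (hreg : IsLocalHomeomorph φ)
    (d : ℕ) (hd : Nat.card (N ⧸ K.subgroupOf N) = d)
    (hNy : ∀ y ∈ Y, ∀ g : G, g • y ∈ Y → g ∈ N) :
    IsCoveringMap φ ∧ ∀ x : X, Nat.card (φ ⁻¹' {x}) = d := by
  obtain rfl : K = fixingSubgroup G Y :=
    SetLike.ext' (hK.trans (by ext; simp [mem_fixingSubgroup_iff]))
  obtain rfl : N = stabilizer G Y := SetLike.ext' hN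
  obtain rfl : φ = sweepMap G Y :=
    funext fun ⟨q, y⟩ => QuotientGroup.induction_on q fun g => hφ g y
  have hsurj : Function.Surjective (sweepMap G Y) := fun x =>
    let ⟨g, y, hy, hx⟩ := hinv x
    ⟨((g : G ⧸ fixingSubgroup G Y), ⟨y, hy⟩), hx⟩
  have := continuousConstSMul_stabilizer_of_continuous G Y hreg.continuous
  have hcov := hreg.isQuotientCoveringMap hsurj (sweepMap_eq_iff_mem_orbit G Y hNy)
  refine ⟨hcov.isCoveringMap, fun x => ?_⟩
  obtain ⟨e, he⟩ := hsurj x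
  rw [Nat.card_congr (hcov.fiberEquivGroup ⟨e, he⟩), ← hd, ← ker_sweepDeckHom]
  exact Nat.card_congr (QuotientGroup.quotientKerEquivRange _).toEquiv.symm

/-- Main theorem. `G` a Lie group acting smoothly on a smooth manifold `X`,
`Y` a closed submanifold (realized as a closed subset carrying a smooth structure for
which the inclusion is a smooth immersion), `K` the pointwise stabilizer of `Y`, and
`φ : G/K × Y → X`, `φ([g], y) = g • y`. Assume:
(a) invariance: `X = ⋃_{y ∈ Y} G • y`;
(b) transversality: `T_yX = T_y(G•y) ⊕ T_yY` for all `y ∈ Y`;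
(c) dimension: `dim G_y = dim K` for all `y ∈ Y` (expressed via the Lie algebras of the
    stabilizers, i.e. the kernels of the differentials of the orbit maps at `1`);
`φ` is everywhere regular (being a regular map between manifolds of equal dimension,
this is expressed as: `φ` is a local homeomorphism);
`N/K` is finite of order `d`, where `N` is the setwise stabilizer of `Y`;
and `N_y = N` for all `y ∈ Y`. Then `φ` is a `d`-sheeted covering map. -/
theorem stmt_6 {m n r : ℕ} {G X : Type*}
    [TopologicalSpace G] [ChartedSpace (EuclideanSpace ℝ (Fin m)) G]
    [Group G] [IsTopologicalGroup G] [LieGroup (𝓡 m) (⊤ : ℕ∞) G]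
    [TopologicalSpace X] [ChartedSpace (EuclideanSpace ℝ (Fin n)) X]
    [IsManifold (𝓡 n) (⊤ : ℕ∞) X]
    [MulAction G X]
    (hsmooth : ContMDiff ((𝓡 m).prod (𝓡 n)) (𝓡 n) (⊤ : ℕ∞) (fun p : G × X => p.1 • p.2))
    (Y : Set X) (hYclosed : IsClosed Y)
    [ChartedSpace (EuclideanSpace ℝ (Fin r)) Y] [IsManifold (𝓡 r) (⊤ : ℕ∞) Y]
    (hincl : ContMDiff (𝓡 r) (𝓡 n) (⊤ : ℕ∞) ((↑) : Y → X))
    (himm : ∀ y : Y, Function.Injective (mfderiv (𝓡 r) (𝓡 n) ((↑) : Y → X) y))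
    (K N : Subgroup G)
    (hK : (K : Set G) = {g : G | ∀ y ∈ Y, g • y = y})
    (hN : (N : Set G) = {g : G | g • Y = Y})
    (φ : (G ⧸ K) × Y → X)
    (hφ : ∀ (g : G) (y : Y), φ ((g : G ⧸ K), y) = g • (y : X))
    -- (a) invariance condition
    (hinv : ∀ x : X, ∃ g : G, ∃ y ∈ Y, g • y = x)
    -- (b) transversality condition
    (htrans : ∀ y : Y,
      IsCompl
        (LinearMap.range ((mfderiv (𝓡 m) (𝓡 n) (fun g : G => g • (y : X)) 1 :
          TangentSpace (𝓡 m) (1 : G) →ₗ[ℝ] TangentSpace (𝓡 n) ((1 : G) • (y : X)))))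
        (LinearMap.range ((mfderiv (𝓡 r) (𝓡 n) ((↑) : Y → X) y :
          TangentSpace (𝓡 r) y →ₗ[ℝ] TangentSpace (𝓡 n) (y : X))) :
          Submodule ℝ (TangentSpace (𝓡 n) ((1 : G) • (y : X)))))
    -- (c) dimension condition: dim G_y = dim K
    (hdim : ∀ y : Y,
      Module.finrank ℝ
        (LinearMap.ker ((mfderiv (𝓡 m) (𝓡 n) (fun g : G => g • (y : X)) 1 :
          TangentSpace (𝓡 m) (1 : G) →ₗ[ℝ] TangentSpace (𝓡 n) ((1 : G) • (y : X))))) =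
      Module.finrank ℝ
        ↥(⨅ y' : Y, LinearMap.ker ((mfderiv (𝓡 m) (𝓡 n) (fun g : G => g • (y' : X)) 1 :
          TangentSpace (𝓡 m) (1 : G) →ₗ[ℝ] TangentSpace (𝓡 n) ((1 : G) • (y' : X))))))
    -- φ is everywhere regular
    (hreg : IsLocalHomeomorph φ)
    (d : ℕ) (hd : Nat.card (N ⧸ K.subgroupOf N) = d)
    (hNy : ∀ y ∈ Y, ∀ g : G, g • y ∈ Y → g ∈ N) :
    IsCoveringMap φ ∧ ∀ x : X, Nat.card (φ ⁻¹' {x}) = d :=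
  stmt_6_general Y K N hK hN φ hφ hinv hreg d hd hNy
end
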